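/- arXiv:2310.15768 — 4 statements merged into one kernel-verified Lean document; each statement's English description precedes it below -/
import Mathlib

section
/- Let c ≥ 0 be a real number and let θ, θ₀ be real numbers with 0 ≤ θ ≤ θ₀ ≤ π/2. Then sin θ / √(c + 1 + 2·√c·cos θ) ≤ sin θ₀ / √(c + 1 + 2·√c·cos θ₀). (This is the monotonicity step justifying inequality (eq:theta) in the achievability proof, with c = P/(σ²+ε).) -/
theorem sin_div_sqrt_mono (c θ θ₀ : ℝ) (hc : 0 ≤ c)
    (hθ : 0 ≤ θ) (hθθ₀ : θ ≤ θ₀) (hθ₀ : θ₀ ≤ Real.pi / 2) :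
    Real.sin θ / Real.sqrt (c + 1 + 2 * Real.sqrt c * Real.cos θ)
      ≤ Real.sin θ₀ / Real.sqrt (c + 1 + 2 * Real.sqrt c * Real.cos θ₀) := by
  have hsc : 0 ≤ Real.sqrt c := Real.sqrt_nonneg c
  have hcosθ₀ : 0 ≤ Real.cos θ₀ :=
    Real.cos_nonneg_of_mem_Icc ⟨by linarith [Real.pi_pos], hθ₀⟩
  have hden₀pos : 0 < c + 1 + 2 * Real.sqrt c * Real.cos θ₀ := by positivity
  have hcos : Real.cos θ₀ ≤ Real.cos θ :=
    Real.cos_le_cos_of_nonneg_of_le_pi hθ (by linarith [Real.pi_pos]) hθθ₀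
  have hsin : Real.sin θ ≤ Real.sin θ₀ :=
    Real.sin_le_sin_of_le_of_le_pi_div_two (by linarith [Real.pi_pos]) hθ₀ hθθ₀
  have hsin₀ : 0 ≤ Real.sin θ₀ :=
    Real.sin_nonneg_of_nonneg_of_le_pi (by linarith) (by linarith [Real.pi_pos])
  apply div_le_div₀ hsin₀ hsin (Real.sqrt_pos.mpr hden₀pos)
  apply Real.sqrt_le_sqrt
  nlinarith
end

section
/- Let E be a real inner product space, let n be a positive natural number, and let P, σ, ε > 0 be real numbers. Let x, z ∈ E be nonzero with ‖x‖² = n·P and ‖z‖² ≤ n·(σ² + ε), and let θ₀ ∈ [0, π/2] satisfy ∠(x, z) ≤ θ₀. Then sin(∠(x, x + z)) ≤ sin θ₀ / √( P/(σ²+ε) + 1 + 2·√(P/(σ²+ε))·cos θ₀ ). (This is the bound sin α ≤ sin α₀ of equations (eq:theta)–(eq:sin) in the achievability proof.) -/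
open InnerProductGeometry

open scoped RealInnerProductSpace

set_option maxHeartbeats 1000000 in
theorem sin_angle_le_sin_alpha0 (E : Type*) [NormedAddCommGroup E] [InnerProductSpace ℝ E]
    (n : ℕ) (hn : 0 < n) (P σ ε : ℝ) (hP : 0 < P) (hσ : 0 < σ) (hε : 0 < ε)
    (x z : E) (hx : x ≠ 0) (hz : z ≠ 0)
    (hxP : ‖x‖ ^ 2 = n * P) (hzσ : ‖z‖ ^ 2 ≤ n * (σ ^ 2 + ε))
    (θ₀ : ℝ) (hθ₀0 : 0 ≤ θ₀) (hθ₀pi : θ₀ ≤ Real.pi / 2) (hangle : angle x z ≤ θ₀) :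
    Real.sin (angle x (x + z))
      ≤ Real.sin θ₀
        / Real.sqrt (P / (σ ^ 2 + ε) + 1
            + 2 * Real.sqrt (P / (σ ^ 2 + ε)) * Real.cos θ₀) := by
  have hpi := Real.pi_pos
  have hσε : (0:ℝ) < σ ^ 2 + ε := by positivity
  set r := P / (σ ^ 2 + ε) with hrdef
  have hrpos : 0 < r := by positivity
  have ha : 0 < ‖x‖ := norm_pos_iff.mpr hx
  have hb : 0 < ‖z‖ := norm_pos_iff.mpr hz
  have hθnn : 0 ≤ angle x z := angle_nonneg x z
  have hθpi : angle x z ≤ Real.pi := angle_le_pi x z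
  have hcos0 : 0 ≤ Real.cos θ₀ :=
    Real.cos_nonneg_of_mem_Icc ⟨by linarith, hθ₀pi⟩
  have hcosθ : Real.cos θ₀ ≤ Real.cos (angle x z) :=
    Real.cos_le_cos_of_nonneg_of_le_pi hθnn (by linarith) hangle
  have hsinθnn : 0 ≤ Real.sin (angle x z) :=
    Real.sin_nonneg_of_nonneg_of_le_pi hθnn hθpi
  have hsinθ : Real.sin (angle x z) ≤ Real.sin θ₀ :=
    Real.strictMonoOn_sin.monotoneOn ⟨by linarith, by linarith⟩
      ⟨by linarith, hθ₀pi⟩ hangle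
  have hsinθ₀nn : 0 ≤ Real.sin θ₀ := le_trans hsinθnn hsinθ
  have hc : (⟪x, z⟫) = ‖x‖ * ‖z‖ * Real.cos (angle x z) := by
    rw [cos_angle]; field_simp
  have hxz : x + z ≠ 0 := by
    intro h
    have hzx : z = -x := by
      have := eq_neg_of_add_eq_zero_right h
      exact this
    have hnz : ‖z‖ = ‖x‖ := by rw [hzx, norm_neg]
    have hin : (⟪x, z⟫) = -(‖x‖ ^ 2) := by
      rw [hzx, inner_neg_right, real_inner_self_eq_norm_sq]
    rw [hin, hnz] at hc
    nlinarith [hcosθ, hcos0]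
  set m := ‖x + z‖ with hmdef
  have hmpos : 0 < m := norm_pos_iff.mpr hxz
  have hm2 : m ^ 2 = ‖x‖ ^ 2 + 2 * (⟪x, z⟫) + ‖z‖ ^ 2 := norm_add_sq_real x z
  have hkey := sin_angle_mul_norm_mul_norm x (x + z)
  have hexp : (⟪x, x⟫) * (⟪x + z, x + z⟫) - (⟪x, x + z⟫) * (⟪x, x + z⟫)
      = (‖x‖ * ‖z‖ * Real.sin (angle x z)) ^ 2 := by
    have h1 : (⟪x, x + z⟫) = ‖x‖ ^ 2 + (⟪x, z⟫) := by
      rw [inner_add_right, real_inner_self_eq_norm_sq]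
    have h2 : (⟪x + z, x + z⟫) = m ^ 2 := real_inner_self_eq_norm_sq _
    have hpy := Real.sin_sq_add_cos_sq (angle x z)
    rw [real_inner_self_eq_norm_sq, h1, h2]
    linear_combination (‖x‖ ^ 2) * hm2
      - ((⟪x, z⟫) + ‖x‖ * ‖z‖ * Real.cos (angle x z)) * hc
      - (‖x‖ * ‖z‖) ^ 2 * hpy
  rw [hexp, Real.sqrt_sq (by positivity)] at hkey
  have hsinα : Real.sin (angle x (x + z)) = ‖z‖ * Real.sin (angle x z) / m := by
    rw [eq_div_iff hmpos.ne']
    have h2 : ‖x‖ * (Real.sin (angle x (x + z)) * m)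
        = ‖x‖ * (‖z‖ * Real.sin (angle x z)) := by linear_combination hkey
    exact mul_left_cancel₀ ha.ne' h2
  have hc2 : ‖x‖ * ‖z‖ * Real.cos θ₀ ≤ (⟪x, z⟫) := by
    rw [hc]
    exact mul_le_mul_of_nonneg_left hcosθ (by positivity)
  have hb2r : ‖z‖ ^ 2 * r ≤ ‖x‖ ^ 2 := by
    rw [hxP, hrdef, ← mul_div_assoc, div_le_iff₀ hσε]
    nlinarith [mul_le_mul_of_nonneg_right hzσ hP.le]
  have hbr : ‖z‖ * Real.sqrt r ≤ ‖x‖ := by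
    have h1 : ‖z‖ * Real.sqrt r = Real.sqrt (‖z‖ ^ 2 * r) := by
      rw [Real.sqrt_mul (by positivity), Real.sqrt_sq hb.le]
    rw [h1]
    calc Real.sqrt (‖z‖ ^ 2 * r) ≤ Real.sqrt (‖x‖ ^ 2) := Real.sqrt_le_sqrt hb2r
      _ = ‖x‖ := Real.sqrt_sq ha.le
  set S := r + 1 + 2 * Real.sqrt r * Real.cos θ₀ with hSdef
  have hSpos : 0 < S := by
    have h0 : 0 ≤ 2 * Real.sqrt r * Real.cos θ₀ :=
      mul_nonneg (by positivity) hcos0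
    rw [hSdef]; linarith
  have hprod : 0 ≤ ‖z‖ * Real.cos θ₀ * (‖x‖ - ‖z‖ * Real.sqrt r) :=
    mul_nonneg (mul_nonneg hb.le hcos0) (sub_nonneg.mpr hbr)
  have hb2S : ‖z‖ ^ 2 * S ≤ m ^ 2 := by
    rw [hm2, hSdef]
    nlinarith [hb2r, hc2, hprod]
  have hbS : ‖z‖ * Real.sqrt S ≤ m := by
    have h1 : ‖z‖ * Real.sqrt S = Real.sqrt (‖z‖ ^ 2 * S) := by
      rw [Real.sqrt_mul (by positivity), Real.sqrt_sq hb.le]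
    rw [h1]
    calc Real.sqrt (‖z‖ ^ 2 * S) ≤ Real.sqrt (m ^ 2) := Real.sqrt_le_sqrt hb2S
      _ = m := Real.sqrt_sq hmpos.le
  rw [hsinα, div_le_div_iff₀ hmpos (Real.sqrt_pos.mpr hSpos)]
  calc ‖z‖ * Real.sin (angle x z) * Real.sqrt S
      ≤ ‖z‖ * Real.sin θ₀ * Real.sqrt S :=
        mul_le_mul_of_nonneg_right
          (mul_le_mul_of_nonneg_left hsinθ hb.le) (Real.sqrt_nonneg _)
    _ = Real.sin θ₀ * (‖z‖ * Real.sqrt S) := by ring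
    _ ≤ Real.sin θ₀ * m := mul_le_mul_of_nonneg_left hbS hsinθ₀nn
end

section
/- Let n ≥ 1 be a natural number, R_h ≥ 0 a real number, and ρ : Fin n → ℝ with ρ_k² < 1 for every k. If (1/n)·Σ_k ( −(1/2)·log₂(1 − ρ_k²) ) ≤ R_h, then Σ_k ρ_k² ≤ n·(1 − 2^{−2R_h}). (This is inequality (eq:fanorh) in the converse proof.) -/
theorem sum_sq_corr_le (n : ℕ) (hn : 1 ≤ n) (Rh : ℝ) (hRh : 0 ≤ Rh) (ρ : Fin n → ℝ)
    (hρ : ∀ k, ρ k ^ 2 < 1)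
    (h : (1 / n : ℝ) * ∑ k, (-(1 / 2) * Real.logb 2 (1 - ρ k ^ 2)) ≤ Rh) :
    ∑ k, ρ k ^ 2 ≤ n * (1 - (2 : ℝ) ^ (-(2 * Rh))) := by
  have hn0 : (0:ℝ) < n := by exact_mod_cast hn
  set a : Fin n → ℝ := fun k => Real.logb 2 (1 - ρ k ^ 2) with ha
  have hpos : ∀ k, (0:ℝ) < 1 - ρ k ^ 2 := fun k => by linarith [hρ k]
  have hS : -(2 * Rh) ≤ (1/n : ℝ) * ∑ k, a k := by
    have : (1 / n : ℝ) * ∑ k, (-(1 / 2) * a k) = -(1/2) * ((1/n) * ∑ k, a k) := by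
      rw [← Finset.mul_sum]; ring
    rw [this] at h
    linarith
  -- Jensen: 2^((1/n) Σ a) ≤ (1/n) Σ 2^(a k)
  have hjensen : (2:ℝ) ^ ((1/n : ℝ) * ∑ k, a k) ≤ (1/n : ℝ) * ∑ k, (1 - ρ k ^ 2) := by
    have hconv := convexOn_exp.map_sum_le (t := Finset.univ) (w := fun _ : Fin n => (1/n : ℝ))
      (p := fun k => Real.log 2 * a k)
      (fun _ _ => by positivity)
      (by simp [Finset.sum_const, Finset.card_univ]; field_simp)
      (fun _ _ => Set.mem_univ _)
    have h1 : (2:ℝ) ^ ((1/n : ℝ) * ∑ k, a k) =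
        Real.exp (∑ k, (1/n : ℝ) • (Real.log 2 * a k)) := by
      rw [Real.rpow_def_of_pos (by norm_num)]
      congr 1
      simp only [smul_eq_mul, ← Finset.mul_sum]
      ring
    have h2 : ∀ k, Real.exp (Real.log 2 * a k) = 1 - ρ k ^ 2 := by
      intro k
      rw [← Real.rpow_def_of_pos (by norm_num : (0:ℝ) < 2)]
      exact Real.rpow_logb (by norm_num) (by norm_num) (hpos k)
    calc (2:ℝ) ^ ((1/n : ℝ) * ∑ k, a k)
        = Real.exp (∑ k, (1/n : ℝ) • (Real.log 2 * a k)) := h1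
      _ ≤ ∑ k, (1/n : ℝ) • Real.exp (Real.log 2 * a k) := hconv
      _ = (1/n : ℝ) * ∑ k, (1 - ρ k ^ 2) := by
          simp only [smul_eq_mul, h2, ← Finset.mul_sum]
  have hmono : (2:ℝ) ^ (-(2 * Rh)) ≤ (2:ℝ) ^ ((1/n : ℝ) * ∑ k, a k) :=
    Real.rpow_le_rpow_left_iff (by norm_num : (1:ℝ) < 2) |>.mpr hS
  have hkey : (2:ℝ) ^ (-(2 * Rh)) ≤ (1/n : ℝ) * ∑ k, (1 - ρ k ^ 2) := hmono.trans hjensen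
  have hsum : ∑ k, (1 - ρ k ^ 2) = (n : ℝ) - ∑ k, ρ k ^ 2 := by
    simp [Finset.sum_sub_distrib]
  rw [hsum] at hkey
  have := mul_le_mul_of_nonneg_left hkey (le_of_lt hn0)
  rw [← mul_assoc] at this
  field_simp at this
  nlinarith [this]
end

section
/- Let n ≥ 1 be a natural number, let P, σ > 0 and R_h ≥ 0 be real numbers, and let v, ρ : Fin n → ℝ satisfy: v_k ≥ 0 and |ρ_k| ≤ 1 for all k, Σ_k v_k ≤ n·P, and Σ_k ρ_k² ≤ n·(1 − 2^{−2R_h}). Then Σ_k (1/2)·log₂( 2πe·( v_k + σ² + 2·σ·√(v_k)·|ρ_k| ) ) ≤ n·(1/2)·log₂( 2πe·( P + σ² + 2·σ·√( P·(1 − 2^{−2R_h}) ) ) ). (This is the chain of inequalities (eq:fanoconc)–(eq:fanorhsub) bounding Σ_k h(Y_k) in the converse, where v_k = E[X_k²] and ρ_k is the correlation coefficient between X_k and Z_k; it combines concavity of the logarithm with the Cauchy–Schwarz inequality.) -/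
open Real

theorem sum_entropy_bound (n : ℕ) (hn : 1 ≤ n) (P σ Rh : ℝ)
    (hP : 0 < P) (hσ : 0 < σ) (hRh : 0 ≤ Rh)
    (v ρ : Fin n → ℝ) (hv : ∀ k, 0 ≤ v k) (hρ : ∀ k, |ρ k| ≤ 1)
    (hvP : ∑ k, v k ≤ n * P)
    (hρRh : ∑ k, ρ k ^ 2 ≤ n * (1 - (2 : ℝ) ^ (-(2 * Rh)))) :
    ∑ k, (1 / 2) * Real.logb 2
        (2 * π * Real.exp 1 * (v k + σ ^ 2 + 2 * σ * Real.sqrt (v k) * |ρ k|))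
      ≤ n * ((1 / 2) * Real.logb 2
        (2 * π * Real.exp 1
          * (P + σ ^ 2 + 2 * σ * Real.sqrt (P * (1 - (2 : ℝ) ^ (-(2 * Rh))))))) := by
  have hn1 : (1 : ℝ) ≤ n := by exact_mod_cast hn
  set β : ℝ := 1 - (2 : ℝ) ^ (-(2 * Rh)) with hβdef
  have hβ0 : 0 ≤ β := by
    have h1 : (2:ℝ) ^ (-(2*Rh)) ≤ 1 :=
      Real.rpow_le_one_of_one_le_of_nonpos one_le_two (by linarith)
    simp only [hβdef]; linarith
  set c : ℝ := 2 * π * Real.exp 1 with hc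
  have hcpos : 0 < c := by positivity
  set a : Fin n → ℝ := fun k => v k + σ^2 + 2*σ*Real.sqrt (v k)*|ρ k| with ha
  set A : ℝ := P + σ^2 + 2*σ*Real.sqrt (P*β) with hA
  have hApos : 0 < A := by positivity
  have hak : ∀ k, 0 < a k := by
    intro k
    have h1 := hv k
    have h2 : 0 ≤ 2*σ*Real.sqrt (v k)*|ρ k| := by positivity
    have h3 : 0 < σ^2 := pow_pos hσ 2
    simp only [ha]; linarith
  -- Cauchy–Schwarz
  have hvsum : 0 ≤ ∑ k, v k := Finset.sum_nonneg fun k _ => hv k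
  have hCS : ∑ k, Real.sqrt (v k) * |ρ k| ≤ n * Real.sqrt (P * β) := by
    have h1 : (∑ k, Real.sqrt (v k) * |ρ k|)^2
        ≤ (∑ k, (Real.sqrt (v k))^2) * (∑ k, |ρ k|^2) :=
      Finset.sum_mul_sq_le_sq_mul_sq _ _ _
    have h2 : (∑ k, (Real.sqrt (v k))^2) = ∑ k, v k :=
      Finset.sum_congr rfl fun k _ => Real.sq_sqrt (hv k)
    have h3 : (∑ k, |ρ k|^2) = ∑ k, ρ k ^ 2 :=
      Finset.sum_congr rfl fun k _ => sq_abs _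
    rw [h2, h3] at h1
    have h4 : (∑ k, Real.sqrt (v k) * |ρ k|)^2 ≤ (n*P) * (n*β) := by
      calc (∑ k, Real.sqrt (v k) * |ρ k|)^2 ≤ (∑ k, v k) * (∑ k, ρ k ^ 2) := h1
        _ ≤ (n*P) * (n*β) := by
            apply mul_le_mul hvP hρRh (Finset.sum_nonneg fun k _ => sq_nonneg _)
            positivity
    have hS0 : 0 ≤ ∑ k, Real.sqrt (v k) * |ρ k| :=
      Finset.sum_nonneg fun k _ => mul_nonneg (Real.sqrt_nonneg _) (abs_nonneg _)
    have hT : (∑ k, Real.sqrt (v k) * |ρ k|)^2 ≤ (n * Real.sqrt (P*β))^2 := by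
      have hs : (Real.sqrt (P*β))^2 = P*β := Real.sq_sqrt (by positivity)
      rw [mul_pow, hs]
      calc (∑ k, Real.sqrt (v k) * |ρ k|)^2 ≤ (n*P)*(n*β) := h4
        _ = (n:ℝ)^2 * (P*β) := by ring
    have hnT : 0 ≤ (n:ℝ) * Real.sqrt (P*β) := by positivity
    have := Real.sqrt_le_sqrt hT
    rwa [Real.sqrt_sq hS0, Real.sqrt_sq hnT] at this
  have hsumA : ∑ k, a k ≤ n * A := by
    have h1 : ∑ k, a k = (∑ k, v k) + n * σ^2 + 2*σ * ∑ k, Real.sqrt (v k) * |ρ k| := by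
      simp only [ha, Finset.sum_add_distrib, Finset.sum_const, Finset.card_univ,
        Fintype.card_fin, nsmul_eq_mul, Finset.mul_sum]
      congr 1
      exact Finset.sum_congr rfl fun k _ => by ring
    have h2 : 2*σ * ∑ k, Real.sqrt (v k) * |ρ k| ≤ 2*σ*(n*Real.sqrt (P*β)) := by
      apply mul_le_mul_of_nonneg_left hCS (by positivity)
    simp only [hA]
    nlinarith [h2]
  -- log concavity via tangent line
  have hlog : ∀ k, Real.log (c * a k) ≤ Real.log (c*A) + (a k / A - 1) := by
    intro k
    have hca : 0 < c * a k := mul_pos hcpos (hak k)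
    have hcA : 0 < c * A := mul_pos hcpos hApos
    have hpos : 0 < (c * a k)/(c*A) := div_pos hca hcA
    have h := Real.log_le_sub_one_of_pos hpos
    rw [Real.log_div hca.ne' hcA.ne'] at h
    have heq : (c * a k)/(c*A) = a k / A :=
      mul_div_mul_left _ _ hcpos.ne'
    rw [heq] at h
    linarith
  have hsum : ∑ k, Real.log (c * a k) ≤ n * Real.log (c*A) := by
    calc ∑ k, Real.log (c*a k) ≤ ∑ k, (Real.log (c*A) + (a k / A - 1)) :=
          Finset.sum_le_sum fun k _ => hlog k
      _ = n * Real.log (c*A) + ((∑ k, a k)/A - n) := by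
          rw [Finset.sum_add_distrib, Finset.sum_sub_distrib, ← Finset.sum_div]
          simp [Finset.card_univ, mul_comm]
      _ ≤ n * Real.log (c*A) := by
          have : (∑ k, a k)/A ≤ n := (div_le_iff₀ hApos).mpr (by linarith)
          linarith
  -- conclude
  have hL : (0:ℝ) < Real.log 2 := Real.log_pos one_lt_two
  simp only [Real.logb]
  have e1 : ∑ k, 1/2 * (Real.log (c * a k) / Real.log 2)
      = (∑ k, Real.log (c * a k)) * (2 * Real.log 2)⁻¹ := by
    rw [Finset.sum_mul]
    apply Finset.sum_congr rfl
    intro k _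
    field_simp
  have e2 : (n:ℝ) * (1/2 * (Real.log (c*A) / Real.log 2))
      = (n * Real.log (c*A)) * (2 * Real.log 2)⁻¹ := by
    field_simp
  rw [e1, e2]
  apply mul_le_mul_of_nonneg_right hsum (by positivity)
end
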